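/- arXiv:1606.07636 — 2 statements merged into one kernel-verified Lean document; each statement's English description precedes it below -/
import Mathlib

section
/- For any two policies π, π' and initial distribution μ, μ(v_{π'} − v_π) = (1/(1−γ)) d_{μ,π'} (T_{π'} v_π − v_π), where d_{μ,π'} = (1−γ) μ (I − γ P_{π'})^{−1} is the γ-weighted occupancy measure. -/
/-!
The value difference `w = v_{π'} - v_π` solves the linear system `(I - γ P_{π'}) w = T_{π'} v_π - v_π`:
the reward of `π'` cancels between `v_{π'} = T_{π'} v_{π'}` and `T_{π'} v_π`. For `0 ≤ γ < 1` the
matrix `I - γ P_{π'}` is strictly diagonally dominant, hence invertible, so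
`μ w = μ (I - γ P_{π'})⁻¹ (T_{π'} v_π - v_π)`, which is the claim after unfolding `d_{μ,π'}`.
-/

open Matrix Finset

namespace Matrix

variable {n : Type*} [Fintype n] [DecidableEq n]

lemma det_one_sub_smul_ne_zero_of_mem_rowStochastic {Q : Matrix n n ℝ}
    (hQ : Q ∈ rowStochastic ℝ n) {γ : ℝ} (hγ0 : 0 ≤ γ) (hγ1 : γ < 1) :
    (1 - γ • Q).det ≠ 0 := by
  refine det_ne_zero_of_sum_row_lt_diag fun k => ?_
  have hoff : ∑ j ∈ univ.erase k, ‖(1 - γ • Q) k j‖ = γ * (1 - Q k k) := by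
    rw [← sum_row_of_mem_rowStochastic hQ k, ← add_sum_erase _ _ (mem_univ k),
      add_sub_cancel_left, mul_sum]
    refine sum_congr rfl fun j hj => ?_
    rw [sub_apply, one_apply_ne (ne_of_mem_erase hj).symm, smul_apply, smul_eq_mul, zero_sub,
      norm_neg, Real.norm_of_nonneg (mul_nonneg hγ0 (nonneg_of_mem_rowStochastic hQ))]
  have hdiag : ‖(1 - γ • Q) k k‖ = 1 - γ * Q k k := by
    have : γ * Q k k ≤ 1 := by nlinarith [le_one_of_mem_rowStochastic hQ (i := k) (j := k)]
    rw [sub_apply, one_apply_eq, smul_apply, smul_eq_mul, Real.norm_of_nonneg (by linarith)]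
  rw [hoff, hdiag]
  linarith

lemma one_sub_smul_mulVec_sub_eq {R : Type*} [CommRing R] {Q : Matrix n n R} {γ : R}
    {r v v' : n → R} (hv' : v' = r + γ • Q *ᵥ v') :
    (1 - γ • Q) *ᵥ (v' - v) = r + γ • Q *ᵥ v - v := by
  rw [sub_mulVec, one_mulVec, smul_mulVec, mulVec_sub, smul_sub]
  nth_rw 1 [hv']
  abel

lemma dotProduct_eq_vecMul_inv_dotProduct {R : Type*} [CommRing R] {M : Matrix n n R}
    (hM : IsUnit M.det) {w c : n → R} (hw : M *ᵥ w = c) (μ : n → R) :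
    μ ⬝ᵥ w = μ ᵥ* M⁻¹ ⬝ᵥ c := by
  have := invertibleOfIsUnitDet M hM
  rw [← dotProduct_mulVec, inv_mulVec_eq_vec hw.symm]

end Matrix

section MDP

variable {S A : Type*} [Fintype S] [Fintype A] [DecidableEq S]

/-- The state-to-state transition matrix `P_π` of a stochastic policy `π`. -/
def policyTransition (P : S → A → S → ℝ) (π : S → A → ℝ) : Matrix S S ℝ :=
  of fun s s' => ∑ a, π s a * P s a s'

lemma policyTransition_mem_rowStochastic {P : S → A → S → ℝ} {π : S → A → ℝ}
    (hP0 : ∀ s a s', 0 ≤ P s a s') (hP1 : ∀ s a, ∑ s', P s a s' = 1)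
    (hπ0 : ∀ s a, 0 ≤ π s a) (hπ1 : ∀ s, ∑ a, π s a = 1) :
    policyTransition P π ∈ rowStochastic ℝ S := by
  refine mem_rowStochastic_iff_sum.2 ⟨fun s s' => ?_, fun s => ?_⟩
  · exact sum_nonneg fun a _ => mul_nonneg (hπ0 s a) (hP0 s a s')
  · simp only [policyTransition, of_apply]
    rw [sum_comm]
    simp only [← mul_sum, hP1, mul_one, hπ1]

end MDP

theorem mean_value_difference_via_occupancy_general
    {S A : Type*} [Fintype S] [Fintype A] [DecidableEq S]
    (P : S → A → S → ℝ) (hP0 : ∀ s a s', 0 ≤ P s a s')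
    (hP1 : ∀ s a, ∑ s', P s a s' = 1)
    (R : S → A → ℝ) (γ : ℝ) (hγ0 : 0 < γ) (hγ1 : γ < 1)
    (π' : S → A → ℝ)
    (hπ'0 : ∀ s a, 0 ≤ π' s a) (hπ'1 : ∀ s, ∑ a, π' s a = 1)
    (v v' : S → ℝ)
    (hv' : ∀ s, v' s = (∑ a, π' s a * R s a)
        + γ * ∑ s', (∑ a, π' s a * P s a s') * v' s')
    (μ : S → ℝ)
    (d : S → ℝ)
    (hd : d = (1 - γ) • Matrix.vecMul μ
        (1 - γ • Matrix.of fun s s' => ∑ a, π' s a * P s a s')⁻¹) :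
    ∑ s, μ s * (v' s - v s)
      = (1 / (1 - γ)) * ∑ s, d s * (((∑ a, π' s a * R s a)
          + γ * ∑ s', (∑ a, π' s a * P s a s') * v s') - v s) := by
  set Q := policyTransition P π'
  set r : S → ℝ := fun s => ∑ a, π' s a * R s a
  have hQ := policyTransition_mem_rowStochastic hP0 hP1 hπ'0 hπ'1
  have hM : IsUnit (1 - γ • Q).det :=
    (det_one_sub_smul_ne_zero_of_mem_rowStochastic hQ hγ0.le hγ1).isUnit
  have hw : (1 - γ • Q) *ᵥ (v' - v) = r + γ • Q *ᵥ v - v :=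
    one_sub_smul_mulVec_sub_eq (funext hv')
  have hμw : μ ⬝ᵥ (v' - v) = μ ᵥ* (1 - γ • Q)⁻¹ ⬝ᵥ (r + γ • Q *ᵥ v - v) :=
    dotProduct_eq_vecMul_inv_dotProduct hM hw μ
  have h1γ : 1 - γ ≠ 0 := by linarith
  change μ ⬝ᵥ (v' - v) = 1 / (1 - γ) * (d ⬝ᵥ (r + γ • Q *ᵥ v - v))
  rw [hd, smul_dotProduct, hμw, smul_eq_mul, one_div, inv_mul_cancel_left₀ h1γ]
  rfl

/-- `μ(v_{π'} − v_π) = (1/(1−γ)) d_{μ,π'} (T_{π'} v_π − v_π)`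
with `d_{μ,π'} = (1−γ) μ (I − γ P_{π'})⁻¹`. -/
theorem mean_value_difference_via_occupancy
    {S A : Type*} [Fintype S] [Fintype A] [DecidableEq S]
    (P : S → A → S → ℝ) (hP0 : ∀ s a s', 0 ≤ P s a s')
    (hP1 : ∀ s a, ∑ s', P s a s' = 1)
    (R : S → A → ℝ) (γ : ℝ) (hγ0 : 0 < γ) (hγ1 : γ < 1)
    (π π' : S → A → ℝ)
    (hπ0 : ∀ s a, 0 ≤ π s a) (hπ1 : ∀ s, ∑ a, π s a = 1)
    (hπ'0 : ∀ s a, 0 ≤ π' s a) (hπ'1 : ∀ s, ∑ a, π' s a = 1)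
    (v v' : S → ℝ)
    (hv : ∀ s, v s = (∑ a, π s a * R s a)
        + γ * ∑ s', (∑ a, π s a * P s a s') * v s')
    (hv' : ∀ s, v' s = (∑ a, π' s a * R s a)
        + γ * ∑ s', (∑ a, π' s a * P s a s') * v' s')
    (μ : S → ℝ) (hμ0 : ∀ s, 0 ≤ μ s) (hμ1 : ∑ s, μ s = 1)
    (d : S → ℝ)
    (hd : d = (1 - γ) • Matrix.vecMul μ
        (1 - γ • Matrix.of fun s s' => ∑ a, π' s a * P s a s')⁻¹) :
    ∑ s, μ s * (v' s - v s)
      = (1 / (1 - γ)) * ∑ s, d s * (((∑ a, π' s a * R s a)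
          + γ * ∑ s', (∑ a, π' s a * P s a s') * v s') - v s) :=
  mean_value_difference_via_occupancy_general P hP0 hP1 R γ hγ0 hγ1 π' hπ'0 hπ'1 v v' hv' μ d hd
end

section
/- Proxy bound for residual policy search: for any policy π and distributions μ, ν on states, ‖v_* − v_π‖_{1,μ} ≤ (1/(1−γ)) · ‖d_{μ,π_*}/ν‖_∞ · ‖T_* v_π − v_π‖_{1,ν}, where π_* is an optimal policy. -/
/-!
Write `w = v_* - v_π` and `r = T_* v_π - v_π`. Both are nonnegative: `T_π ≤ T_*` pointwise, and
`I - γ P_π` is inverse-monotone for a stochastic `P_π` (discrete maximum principle), so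
`(I - γ P_π) w = v_* - T_π v_* ≥ 0` forces `w ≥ 0`. Since `v_*` is the fixed point of `T_{π_*}`,
`(I - γ P_{π_*}) w = T_{π_*} v_π - v_π ≤ r`. The occupancy measure
`d = (1 - γ) μ (I - γ P_{π_*})⁻¹` is nonnegative, again by the maximum principle, so
`(1 - γ) μ ⬝ w = d ⬝ (I - γ P_{π_*}) w ≤ d ⬝ r ≤ C ν ⬝ r`.
-/

open Finset Matrix

namespace Matrix

variable {n : Type*} [Fintype n] [DecidableEq n] {Q : Matrix n n ℝ} {γ : ℝ}

lemma mulVec_one_sub_smul (Q : Matrix n n ℝ) (γ : ℝ) (x : n → ℝ) :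
    (1 - γ • Q) *ᵥ x = x - γ • Q *ᵥ x := by
  rw [sub_mulVec, one_mulVec, smul_mulVec]

lemma mulVec_one_sub_smul_sub_of_eq {r x y : n → ℝ} (hy : y = r + γ • Q *ᵥ y) :
    (1 - γ • Q) *ᵥ (x - y) = x - (r + γ • Q *ᵥ x) := by
  have hr : y - γ • Q *ᵥ y = r := sub_eq_of_eq_add hy
  rw [mulVec_one_sub_smul, mulVec_sub, smul_sub, ← hr]
  abel

/-- Discrete maximum principle: at a coordinate where `x` is minimal, `Q *ᵥ x` is at least `x`. -/
lemma nonneg_of_nonneg_mulVec_one_sub_smul (hQ : Q ∈ rowStochastic ℝ n) (hγ0 : 0 ≤ γ)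
    (hγ1 : γ < 1) {x : n → ℝ} (hx : 0 ≤ (1 - γ • Q) *ᵥ x) : 0 ≤ x := by
  intro s
  obtain ⟨s₀, -, hmin⟩ := exists_min_image univ x ⟨s, mem_univ s⟩
  have hQx : x s₀ ≤ (Q *ᵥ x) s₀ := by
    have := nonneg_mulVec_of_mem_rowStochastic hQ (x := x - x s₀ • 1)
      (fun t => sub_nonneg.2 (by simpa using hmin t (mem_univ t)))
    simpa [mulVec_sub, mulVec_smul, one_vecMul_of_mem_rowStochastic hQ] using this s₀
  have hx₀ : 0 ≤ x s₀ - γ * (Q *ᵥ x) s₀ := by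
    simpa [mulVec_one_sub_smul] using hx s₀
  have : 0 ≤ x s₀ := by nlinarith
  exact this.trans (hmin s (mem_univ s))

lemma isUnit_one_sub_smul (hQ : Q ∈ rowStochastic ℝ n) (hγ0 : 0 ≤ γ) (hγ1 : γ < 1) :
    IsUnit (1 - γ • Q) := by
  refine mulVec_injective_iff_isUnit.1 fun x y hxy => ?_
  have hker : ∀ z, (1 - γ • Q) *ᵥ z = 0 → 0 ≤ z := fun z hz =>
    nonneg_of_nonneg_mulVec_one_sub_smul hQ hγ0 hγ1 hz.ge
  refine le_antisymm ?_ ?_ <;> exact sub_nonneg.1 (hker _ (by rw [mulVec_sub, hxy, sub_self]))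

lemma inv_one_sub_smul_nonneg (hQ : Q ∈ rowStochastic ℝ n) (hγ0 : 0 ≤ γ) (hγ1 : γ < 1)
    (i j : n) : 0 ≤ (1 - γ • Q)⁻¹ i j := by
  have hdet := (isUnit_iff_isUnit_det _).1 (isUnit_one_sub_smul hQ hγ0 hγ1)
  have hcol : (1 - γ • Q) *ᵥ ((1 - γ • Q)⁻¹ *ᵥ Pi.single j 1) = Pi.single j 1 := by
    rw [mulVec_mulVec, mul_nonsing_inv _ hdet, one_mulVec]
  have := nonneg_of_nonneg_mulVec_one_sub_smul hQ hγ0 hγ1 (hcol ▸ Pi.single_nonneg.2 zero_le_one) i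
  simpa [mulVec_single_one] using this

end Matrix

namespace MDP

section Occupancy

variable {S : Type*} [Fintype S] [DecidableEq S] {Q : Matrix S S ℝ} {γ : ℝ}

noncomputable def occupancy (μ : S → ℝ) (Q : Matrix S S ℝ) (γ : ℝ) : S → ℝ :=
  (1 - γ) • μ ᵥ* (1 - γ • Q)⁻¹

lemma occupancy_nonneg (hQ : Q ∈ rowStochastic ℝ S) (hγ0 : 0 ≤ γ) (hγ1 : γ < 1) {μ : S → ℝ}
    (hμ : 0 ≤ μ) : 0 ≤ occupancy μ Q γ := fun j =>
  mul_nonneg (sub_nonneg.2 hγ1.le) <|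
    sum_nonneg fun i _ => mul_nonneg (hμ i) (inv_one_sub_smul_nonneg hQ hγ0 hγ1 i j)

lemma occupancy_dotProduct_mulVec (hQ : Q ∈ rowStochastic ℝ S) (hγ0 : 0 ≤ γ) (hγ1 : γ < 1)
    (μ w : S → ℝ) : occupancy μ Q γ ⬝ᵥ ((1 - γ • Q) *ᵥ w) = (1 - γ) * (μ ⬝ᵥ w) := by
  have hdet := (isUnit_iff_isUnit_det _).1 (isUnit_one_sub_smul hQ hγ0 hγ1)
  rw [occupancy, dotProduct_mulVec, smul_vecMul, vecMul_vecMul, nonsing_inv_mul _ hdet,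
    vecMul_one, smul_dotProduct, smul_eq_mul]

lemma dotProduct_le_of_occupancy_le (hQ : Q ∈ rowStochastic ℝ S) (hγ0 : 0 ≤ γ) (hγ1 : γ < 1)
    {μ ν w r : S → ℝ} {C : ℝ} (hμ : 0 ≤ μ) (hr : 0 ≤ r) (hd : occupancy μ Q γ ≤ C • ν)
    (hw : (1 - γ • Q) *ᵥ w ≤ r) : (1 - γ) * (μ ⬝ᵥ w) ≤ C * (ν ⬝ᵥ r) := by
  rw [← occupancy_dotProduct_mulVec hQ hγ0 hγ1, ← smul_eq_mul, ← smul_dotProduct]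
  calc occupancy μ Q γ ⬝ᵥ ((1 - γ • Q) *ᵥ w) ≤ occupancy μ Q γ ⬝ᵥ r :=
        dotProduct_le_dotProduct_of_nonneg_left hw (occupancy_nonneg hQ hγ0 hγ1 hμ)
    _ ≤ (C • ν) ⬝ᵥ r := dotProduct_le_dotProduct_of_nonneg_right hd hr

end Occupancy

variable {S A : Type*} [Fintype S] [Fintype A]

def qValue (P : S → A → S → ℝ) (R : S → A → ℝ) (γ : ℝ) (v : S → ℝ) (s : S) (a : A) : ℝ :=
  R s a + γ * ∑ s', P s a s' * v s'

def bellmanOpt [Nonempty A] (P : S → A → S → ℝ) (R : S → A → ℝ) (γ : ℝ) (v : S → ℝ) : S → ℝ :=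
  fun s => univ.sup' univ_nonempty (qValue P R γ v s)

def policyReward (π : S → A → ℝ) (R : S → A → ℝ) : S → ℝ :=
  fun s => ∑ a, π s a * R s a

def policyMatrix (π : S → A → ℝ) (P : S → A → S → ℝ) : Matrix S S ℝ :=
  Matrix.of fun s s' => ∑ a, π s a * P s a s'

def policyEval (π : S → A → ℝ) (P : S → A → S → ℝ) (R : S → A → ℝ) (γ : ℝ) (v : S → ℝ) :
    S → ℝ :=
  policyReward π R + γ • policyMatrix π P *ᵥ v

lemma policyMatrix_mem_rowStochastic [DecidableEq S] {π : S → A → ℝ} {P : S → A → S → ℝ}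
    (hP0 : ∀ s a s', 0 ≤ P s a s') (hP1 : ∀ s a, ∑ s', P s a s' = 1)
    (hπ0 : ∀ s a, 0 ≤ π s a) (hπ1 : ∀ s, ∑ a, π s a = 1) :
    policyMatrix π P ∈ rowStochastic ℝ S := by
  refine mem_rowStochastic_iff_sum.2 ⟨fun s s' => ?_, fun s => ?_⟩
  · exact sum_nonneg fun a _ => mul_nonneg (hπ0 s a) (hP0 s a s')
  · simp only [policyMatrix, of_apply]
    rw [sum_comm]
    simp [← mul_sum, hP1, hπ1]

lemma policyEval_apply (π : S → A → ℝ) (P : S → A → S → ℝ) (R : S → A → ℝ)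
    (γ : ℝ) (v : S → ℝ) (s : S) :
    policyEval π P R γ v s = ∑ a, π s a * qValue P R γ v s a := by
  simp only [policyEval, Pi.add_apply, Pi.smul_apply, smul_eq_mul, policyReward, policyMatrix,
    qValue, mulVec, dotProduct, of_apply, mul_add, sum_add_distrib, mul_sum, sum_mul]
  rw [sum_comm]
  congr 1
  exact sum_congr rfl fun _ _ => sum_congr rfl fun _ _ => by ring

lemma policyEval_le_bellmanOpt [Nonempty A] {π : S → A → ℝ}
    (hπ0 : ∀ s a, 0 ≤ π s a) (hπ1 : ∀ s, ∑ a, π s a = 1) (P : S → A → S → ℝ) (R : S → A → ℝ)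
    (γ : ℝ) (v : S → ℝ) :
    policyEval π P R γ v ≤ bellmanOpt P R γ v := fun s => by
  have h := univ.centerMass_le_sup (f := qValue P R γ v s) (fun a _ => hπ0 s a)
    (by rw [hπ1 s]; exact one_pos)
  rw [univ.centerMass_eq_of_sum_1 _ (hπ1 s)] at h
  simp only [smul_eq_mul] at h
  rw [policyEval_apply]
  exact h

variable [DecidableEq S] [Nonempty A] {P : S → A → S → ℝ} {R : S → A → ℝ} {γ : ℝ}
  {π : S → A → ℝ}

lemma le_of_eq_policyEval_of_eq_bellmanOpt (hP0 : ∀ s a s', 0 ≤ P s a s')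
    (hP1 : ∀ s a, ∑ s', P s a s' = 1) (hγ0 : 0 ≤ γ) (hγ1 : γ < 1)
    (hπ0 : ∀ s a, 0 ≤ π s a) (hπ1 : ∀ s, ∑ a, π s a = 1) {v vstar : S → ℝ}
    (hv : v = policyEval π P R γ v)
    (hvstar : vstar = bellmanOpt P R γ vstar) : v ≤ vstar := by
  refine sub_nonneg.1 <| nonneg_of_nonneg_mulVec_one_sub_smul
    (policyMatrix_mem_rowStochastic hP0 hP1 hπ0 hπ1) hγ0 hγ1 ?_
  rw [mulVec_one_sub_smul_sub_of_eq hv, sub_nonneg]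
  exact (policyEval_le_bellmanOpt hπ0 hπ1 P R γ vstar).trans hvstar.ge

lemma mulVec_one_sub_smul_sub_le_bellmanOpt_sub (hπ0 : ∀ s a, 0 ≤ π s a)
    (hπ1 : ∀ s, ∑ a, π s a = 1) {vstar : S → ℝ}
    (hvstar : vstar = policyEval π P R γ vstar) (v : S → ℝ) :
    (1 - γ • policyMatrix π P) *ᵥ (vstar - v) ≤ bellmanOpt P R γ v - v := by
  rw [← neg_sub v, mulVec_neg, mulVec_one_sub_smul_sub_of_eq hvstar, neg_sub]
  exact sub_le_sub_right (policyEval_le_bellmanOpt hπ0 hπ1 P R γ v) v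

end MDP

open MDP

theorem residual_proxy_bound_general
    {S A : Type*} [Fintype S] [Fintype A] [Nonempty A] [DecidableEq S]
    (P : S → A → S → ℝ) (hP0 : ∀ s a s', 0 ≤ P s a s')
    (hP1 : ∀ s a, ∑ s', P s a s' = 1)
    (R : S → A → ℝ) (γ : ℝ) (hγ0 : 0 < γ) (hγ1 : γ < 1)
    -- the policy π and its value function v
    (π : S → A → ℝ) (hπ0 : ∀ s a, 0 ≤ π s a) (hπ1 : ∀ s, ∑ a, π s a = 1)
    (v : S → ℝ)
    (hv : ∀ s, v s = (∑ a, π s a * R s a)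
        + γ * ∑ s', (∑ a, π s a * P s a s') * v s')
    -- an optimal policy π_* whose value vstar is the fixed point of T_*
    (πstar : S → A → ℝ) (hπs0 : ∀ s a, 0 ≤ πstar s a) (hπs1 : ∀ s, ∑ a, πstar s a = 1)
    (vstar : S → ℝ)
    (hvs : ∀ s, vstar s = (∑ a, πstar s a * R s a)
        + γ * ∑ s', (∑ a, πstar s a * P s a s') * vstar s')
    (hvsopt : ∀ s, vstar s = Finset.univ.sup' Finset.univ_nonempty
        (fun a => R s a + γ * ∑ s', P s a s' * vstar s'))
    -- distributions μ and ν
    (μ : S → ℝ) (hμ0 : ∀ s, 0 ≤ μ s)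
    (ν : S → ℝ)
    -- the occupancy measure d_{μ,π_*}
    (d : S → ℝ)
    (hd : d = (1 - γ) • Matrix.vecMul μ
        (1 - γ • Matrix.of fun s s' => ∑ a, πstar s a * P s a s')⁻¹)
    -- the concentrability coefficient C = ‖d_{μ,π_*}/ν‖_∞ (smallest such constant)
    (C : ℝ) (hC : IsLeast {c : ℝ | ∀ s, d s ≤ c * ν s} C) :
    ∑ s, μ s * |vstar s - v s|
      ≤ (1 / (1 - γ)) * C *
        ∑ s, ν s * |Finset.univ.sup' Finset.univ_nonempty
          (fun a => R s a + γ * ∑ s', P s a s' * v s') - v s| := by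
  have hv' : v = policyEval π P R γ v := funext hv
  have hvs' : vstar = policyEval πstar P R γ vstar := funext hvs
  have hgap : 0 ≤ vstar - v := sub_nonneg.2 <|
    le_of_eq_policyEval_of_eq_bellmanOpt hP0 hP1 hγ0.le hγ1 hπ0 hπ1 hv' (funext hvsopt)
  have hres : 0 ≤ bellmanOpt P R γ v - v :=
    sub_nonneg.2 <| hv'.le.trans (policyEval_le_bellmanOpt hπ0 hπ1 P R γ v)
  have hdν : occupancy μ (policyMatrix πstar P) γ ≤ C • ν := by
    subst hd
    exact fun s => hC.1 s
  have key := dotProduct_le_of_occupancy_le (policyMatrix_mem_rowStochastic hP0 hP1 hπs0 hπs1)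
    hγ0.le hγ1 hμ0 hres hdν (mulVec_one_sub_smul_sub_le_bellmanOpt_sub hπs0 hπs1 hvs' v)
  have hgap_abs : ∑ s, μ s * |vstar s - v s| = μ ⬝ᵥ (vstar - v) :=
    sum_congr rfl fun s _ => congrArg _ (abs_of_nonneg (hgap s))
  have hres_abs : ∑ s, ν s * |univ.sup' univ_nonempty
      (fun a => R s a + γ * ∑ s', P s a s' * v s') - v s| = ν ⬝ᵥ (bellmanOpt P R γ v - v) :=
    sum_congr rfl fun s _ => congrArg _ (abs_of_nonneg (hres s))
  rw [hgap_abs, hres_abs, mul_assoc, one_div, le_inv_mul_iff₀ (sub_pos.2 hγ1)]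
  exact key

/-- proxy bound for residual policy search:
`‖v_* − v_π‖_{1,μ} ≤ (1/(1−γ)) ‖d_{μ,π_*}/ν‖_∞ ‖T_* v_π − v_π‖_{1,ν}`. -/
theorem residual_proxy_bound
    {S A : Type*} [Fintype S] [Fintype A] [Nonempty A] [DecidableEq S]
    (P : S → A → S → ℝ) (hP0 : ∀ s a s', 0 ≤ P s a s')
    (hP1 : ∀ s a, ∑ s', P s a s' = 1)
    (R : S → A → ℝ) (γ : ℝ) (hγ0 : 0 < γ) (hγ1 : γ < 1)
    -- the policy π and its value function v
    (π : S → A → ℝ) (hπ0 : ∀ s a, 0 ≤ π s a) (hπ1 : ∀ s, ∑ a, π s a = 1)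
    (v : S → ℝ)
    (hv : ∀ s, v s = (∑ a, π s a * R s a)
        + γ * ∑ s', (∑ a, π s a * P s a s') * v s')
    -- an optimal policy π_* whose value vstar is the fixed point of T_*
    (πstar : S → A → ℝ) (hπs0 : ∀ s a, 0 ≤ πstar s a) (hπs1 : ∀ s, ∑ a, πstar s a = 1)
    (vstar : S → ℝ)
    (hvs : ∀ s, vstar s = (∑ a, πstar s a * R s a)
        + γ * ∑ s', (∑ a, πstar s a * P s a s') * vstar s')
    (hvsopt : ∀ s, vstar s = Finset.univ.sup' Finset.univ_nonempty
        (fun a => R s a + γ * ∑ s', P s a s' * vstar s'))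
    -- distributions μ and ν
    (μ : S → ℝ) (hμ0 : ∀ s, 0 ≤ μ s) (hμ1 : ∑ s, μ s = 1)
    (ν : S → ℝ) (hν0 : ∀ s, 0 ≤ ν s) (hν1 : ∑ s, ν s = 1)
    -- the occupancy measure d_{μ,π_*}
    (d : S → ℝ)
    (hd : d = (1 - γ) • Matrix.vecMul μ
        (1 - γ • Matrix.of fun s s' => ∑ a, πstar s a * P s a s')⁻¹)
    -- the concentrability coefficient C = ‖d_{μ,π_*}/ν‖_∞ (smallest such constant)
    (C : ℝ) (hC : IsLeast {c : ℝ | ∀ s, d s ≤ c * ν s} C) :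
    ∑ s, μ s * |vstar s - v s|
      ≤ (1 / (1 - γ)) * C *
        ∑ s, ν s * |Finset.univ.sup' Finset.univ_nonempty
          (fun a => R s a + γ * ∑ s', P s a s' * v s') - v s| :=
  residual_proxy_bound_general P hP0 hP1 R γ hγ0 hγ1 π hπ0 hπ1 v hv πstar hπs0 hπs1 vstar hvs hvsopt
    μ hμ0 ν d hd C hC
end
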